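/- Let f : [a,b] → ℝ be absolutely continuous with f'' ∈ L¹[a,b] and |f''| s-convex in the second sense on [a,b] for some s ∈ (0,1]. Then the following Bullen-type inequality holds: |(1/2)[f((a+b)/2) + (f(a)+f(b))/2] - (1/(b-a))∫_a^b f(t)dt| ≤ ((b-a)²/(8(s+2)(s+3)))·[|f''((a+b)/2)| + (|f''(a)| + |f''(b)|)/2]. -/

import Mathlib

/-!
Integrating by parts twice on each half `[c, d]` of `[a, b]` turns the Bullen error into
`(2 (b - a))⁻¹` times the sum of the two integrals `∫_c^d (x - c)(d - x) f''(x) dx`. On a half,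
s-convexity bounds `|f''(c + t (d - c))|` by `(1 - t)^s |f''(c)| + t^s |f''(d)|`, and after the
substitution `x = c + t (d - c)` both weights integrate to the Beta value
`∫_0^1 t (1 - t) t^s dt = 1 / ((s + 2)(s + 3))`.
-/

open MeasureTheory Set intervalIntegral

theorem integral_mul_one_sub_mul_rpow {s : ℝ} (hs : -1 < s) :
    ∫ t in (0:ℝ)..1, t * (1 - t) * t ^ s = 1 / ((s + 2) * (s + 3)) := by
  have hsplit : EqOn (fun t : ℝ => t * (1 - t) * t ^ s)
      (fun t => t ^ (s + 1) - t ^ (s + 1 + 1)) (uIcc 0 1) := by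
    intro t ht
    have ht0 : 0 ≤ t := by simp at ht; exact ht.1
    simp only [Real.rpow_add_one' ht0 (by linarith : s + 1 ≠ 0),
      Real.rpow_add_one' ht0 (by linarith : s + 1 + 1 ≠ 0)]
    ring
  rw [integral_congr hsplit, integral_sub (intervalIntegrable_rpow' (by linarith))
      (intervalIntegrable_rpow' (by linarith)), integral_rpow (Or.inl (by linarith)),
    integral_rpow (Or.inl (by linarith)), show s + 1 + 1 = s + 2 by ring,
    show s + 2 + 1 = s + 3 by ring, Real.one_rpow, Real.one_rpow,
    Real.zero_rpow (by linarith), Real.zero_rpow (by linarith)]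
  have h2 : s + 2 ≠ 0 := by linarith
  have h3 : s + 3 ≠ 0 := by linarith
  field_simp
  ring

theorem integral_mul_one_sub_mul_one_sub_rpow {s : ℝ} (hs : -1 < s) :
    ∫ t in (0:ℝ)..1, t * (1 - t) * (1 - t) ^ s = 1 / ((s + 2) * (s + 3)) := by
  have := integral_comp_sub_left (fun t : ℝ => (1 - t) * t * t ^ s) (a := 0) (b := 1) 1
  simp only [sub_sub_cancel, sub_zero, sub_self] at this
  rw [this, ← integral_mul_one_sub_mul_rpow hs]
  exact integral_congr fun t _ => by ring

theorem integral_comp_unitInterval (φ : ℝ → ℝ) {c d : ℝ} (hcd : c ≠ d) :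
    ∫ x in c..d, φ ((x - c) / (d - c)) = (d - c) * ∫ t in (0:ℝ)..1, φ t := by
  have hdc : d - c ≠ 0 := sub_ne_zero.2 hcd.symm
  simp only [sub_div]
  rw [integral_comp_div_sub _ hdc, sub_self, div_sub_div_same, div_self hdc, smul_eq_mul]

theorem integral_sconvex_weight {s : ℝ} (hs : 0 ≤ s) (A D : ℝ) :
    ∫ t in (0:ℝ)..1, t * (1 - t) * ((1 - t) ^ s * A + t ^ s * D)
      = (A + D) / ((s + 2) * (s + 3)) := by
  have hi₁ : IntervalIntegrable (fun t : ℝ => t * (1 - t) * (1 - t) ^ s) volume 0 1 :=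
    (by fun_prop (disch := assumption) : Continuous _).intervalIntegrable 0 1
  have hi₂ : IntervalIntegrable (fun t : ℝ => t * (1 - t) * t ^ s) volume 0 1 :=
    (by fun_prop (disch := assumption) : Continuous _).intervalIntegrable 0 1
  have hsplit : ∀ t : ℝ, t * (1 - t) * ((1 - t) ^ s * A + t ^ s * D)
      = A * (t * (1 - t) * (1 - t) ^ s) + D * (t * (1 - t) * t ^ s) := fun t => by ring
  simp only [hsplit]
  rw [integral_add (hi₁.const_mul A) (hi₂.const_mul D),
    intervalIntegral.integral_const_mul, intervalIntegral.integral_const_mul,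
    integral_mul_one_sub_mul_one_sub_rpow (by linarith),
    integral_mul_one_sub_mul_rpow (by linarith)]
  ring

/-- Breckner's s-convexity in the second sense. -/
def SConvexOn (s : ℝ) (S : Set ℝ) (h : ℝ → ℝ) : Prop :=
  ∀ u ∈ S, ∀ v ∈ S, ∀ t ∈ Icc (0:ℝ) 1,
    h (t * u + (1 - t) * v) ≤ t ^ s * h u + (1 - t) ^ s * h v

namespace SConvexOn

variable {s : ℝ} {S : Set ℝ} {h : ℝ → ℝ}

theorem mono {T : Set ℝ} (hh : SConvexOn s S h) (hTS : T ⊆ S) : SConvexOn s T h :=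
  fun u hu v hv => hh u (hTS hu) v (hTS hv)

theorem le_of_mem_Icc (hh : SConvexOn s S h) {u v x : ℝ} (hu : u ∈ S) (hv : v ∈ S)
    (huv : u < v) (hx : x ∈ Icc u v) :
    h x ≤ (1 - (x - u) / (v - u)) ^ s * h u + ((x - u) / (v - u)) ^ s * h v := by
  have hvu : 0 < v - u := sub_pos.2 huv
  have ht : (x - u) / (v - u) ∈ Icc (0:ℝ) 1 :=
    ⟨div_nonneg (by linarith [hx.1]) hvu.le, (div_le_one hvu).2 (by linarith [hx.2])⟩
  have hx_eq : (1 - (x - u) / (v - u)) * u + (1 - (1 - (x - u) / (v - u))) * v = x := by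
    field_simp; ring
  have := hh u hu v hv (1 - (x - u) / (v - u)) ⟨by linarith [ht.2], by linarith [ht.1]⟩
  rwa [hx_eq, sub_sub_cancel] at this

end SConvexOn

theorem abs_integral_kernel_mul_le {g : ℝ → ℝ} {c d s : ℝ} (hcd : c < d) (hs : 0 ≤ s)
    (hint : IntegrableOn g (Icc c d)) (hg : SConvexOn s (Icc c d) fun x => |g x|) :
    |∫ x in c..d, (x - c) * (d - x) * g x|
      ≤ (d - c) ^ 3 * (|g c| + |g d|) / ((s + 2) * (s + 3)) := by
  set φ : ℝ → ℝ := fun t => t * (1 - t) * ((1 - t) ^ s * |g c| + t ^ s * |g d|)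
  have hφ : Continuous φ := by fun_prop (disch := assumption)
  have hK : IntervalIntegrable (fun x => (x - c) * (d - x) * g x) volume c d := by
    refine (intervalIntegrable_iff_integrableOn_Icc_of_le hcd.le).2 ?_
    exact hint.continuousOn_mul (g := fun x => (x - c) * (d - x)) (by fun_prop) isCompact_Icc
  have hdc : d - c ≠ 0 := (sub_pos.2 hcd).ne'
  have hpt : ∀ x ∈ Icc c d,
      |(x - c) * (d - x) * g x| ≤ (d - c) ^ 2 * φ ((x - c) / (d - c)) := by
    intro x hx
    have hKx : 0 ≤ (x - c) * (d - x) := mul_nonneg (by linarith [hx.1]) (by linarith [hx.2])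
    have hKx_eq : (x - c) * (d - x)
        = (d - c) ^ 2 * ((x - c) / (d - c) * (1 - (x - c) / (d - c))) := by
      field_simp; ring
    calc |(x - c) * (d - x) * g x| = (x - c) * (d - x) * |g x| := by
          rw [abs_mul, abs_of_nonneg hKx]
      _ ≤ (x - c) * (d - x)
            * ((1 - (x - c) / (d - c)) ^ s * |g c| + ((x - c) / (d - c)) ^ s * |g d|) :=
          mul_le_mul_of_nonneg_left (hg.le_of_mem_Icc (left_mem_Icc.2 hcd.le)
            (right_mem_Icc.2 hcd.le) hcd hx) hKx
      _ = (d - c) ^ 2 * φ ((x - c) / (d - c)) := by rw [hKx_eq]; ring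
  have hbound : IntervalIntegrable (fun x => (d - c) ^ 2 * φ ((x - c) / (d - c))) volume c d :=
    (by fun_prop : Continuous fun x => (d - c) ^ 2 * φ ((x - c) / (d - c))).intervalIntegrable c d
  calc |∫ x in c..d, (x - c) * (d - x) * g x|
      ≤ ∫ x in c..d, |(x - c) * (d - x) * g x| := abs_integral_le_integral_abs hcd.le
    _ ≤ ∫ x in c..d, (d - c) ^ 2 * φ ((x - c) / (d - c)) :=
        integral_mono_on hcd.le hK.abs hbound hpt
    _ = (d - c) ^ 3 * ∫ t in (0:ℝ)..1, φ t := by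
        rw [intervalIntegral.integral_const_mul, integral_comp_unitInterval φ hcd.ne]; ring
    _ = _ := by rw [integral_sconvex_weight hs]; ring

theorem integral_kernel_mul_deriv2 {f f' f'' : ℝ → ℝ} {c d : ℝ} (hcd : c ≤ d)
    (hf' : ∀ x ∈ Icc c d, HasDerivAt f (f' x) x)
    (hf'' : ∀ x ∈ Icc c d, HasDerivAt f' (f'' x) x) (hint : IntegrableOn f'' (Icc c d)) :
    ∫ x in c..d, (x - c) * (d - x) * f'' x
      = (d - c) * (f c + f d) - 2 * ∫ x in c..d, f x := by
  have hK : IntervalIntegrable (fun x => (x - c) * (d - x) * f'' x) volume c d := by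
    refine (intervalIntegrable_iff_integrableOn_Icc_of_le hcd).2 ?_
    exact hint.continuousOn_mul (g := fun x => (x - c) * (d - x)) (by fun_prop) isCompact_Icc
  have hf : IntervalIntegrable f volume c d :=
    ContinuousOn.intervalIntegrable_of_Icc hcd fun x hx =>
      (hf' x hx).continuousAt.continuousWithinAt
  have hderiv : ∀ x ∈ uIcc c d,
      HasDerivAt (fun x => (x - c) * (d - x) * f' x - (c + d - 2 * x) * f x)
        ((x - c) * (d - x) * f'' x + 2 * f x) x := by
    intro x hx
    rw [uIcc_of_le hcd] at hx
    refine ((((hasDerivAt_id x).sub_const c).mul ((hasDerivAt_id x).const_sub d)).mul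
      (hf'' x hx)).sub ((((hasDerivAt_id x).const_mul 2).const_sub (c + d)).mul (hf' x hx))
      |>.congr_deriv ?_
    simp only [id, Pi.mul_apply]
    ring
  have hFTC := integral_eq_sub_of_hasDerivAt hderiv (hK.add (hf.const_mul 2))
  rw [integral_add hK (hf.const_mul 2), intervalIntegral.integral_const_mul] at hFTC
  linarith

theorem bullen_identity {f f' f'' : ℝ → ℝ} {a b : ℝ} (hab : a < b)
    (hf' : ∀ x ∈ Icc a b, HasDerivAt f (f' x) x)
    (hf'' : ∀ x ∈ Icc a b, HasDerivAt f' (f'' x) x) (hint : IntegrableOn f'' (Icc a b)) :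
    (1 / 2) * (f ((a + b) / 2) + (f a + f b) / 2) - (1 / (b - a)) * ∫ x in a..b, f x
      = ((∫ x in a..(a + b) / 2, (x - a) * ((a + b) / 2 - x) * f'' x)
          + ∫ x in (a + b) / 2..b, (x - (a + b) / 2) * (b - x) * f'' x) / (2 * (b - a)) := by
  set m := (a + b) / 2 with hm
  have ham : a ≤ m := by linarith
  have hmb : m ≤ b := by linarith
  have hsub₁ : Icc a m ⊆ Icc a b := Icc_subset_Icc_right hmb
  have hsub₂ : Icc m b ⊆ Icc a b := Icc_subset_Icc_left ham
  have hf : ContinuousOn f (Icc a b) := fun x hx => (hf' x hx).continuousAt.continuousWithinAt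
  rw [integral_kernel_mul_deriv2 ham (fun x hx => hf' x (hsub₁ hx))
      (fun x hx => hf'' x (hsub₁ hx)) (hint.mono_set hsub₁),
    integral_kernel_mul_deriv2 hmb (fun x hx => hf' x (hsub₂ hx))
      (fun x hx => hf'' x (hsub₂ hx)) (hint.mono_set hsub₂),
    ← integral_add_adjacent_intervals (a := a) (b := m) (c := b)
      ((hf.mono hsub₁).intervalIntegrable_of_Icc ham)
      ((hf.mono hsub₂).intervalIntegrable_of_Icc hmb)]
  have hba : b - a ≠ 0 := by linarith
  rw [hm]
  field_simp
  ring

theorem sconvex_bullen (f f' f'' : ℝ → ℝ) (a b s : ℝ)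
    (hab : a < b)
    (hs : s ∈ Set.Ioc (0:ℝ) 1)
    (hf' : ∀ t ∈ Set.Icc a b, HasDerivAt f (f' t) t)
    (hf'' : ∀ t ∈ Set.Icc a b, HasDerivAt f' (f'' t) t)
    (hint : IntegrableOn f'' (Set.Icc a b))
    (hsc : ∀ u ∈ Set.Icc a b, ∀ v ∈ Set.Icc a b, ∀ t ∈ Set.Icc (0:ℝ) 1,
        |f'' (t * u + (1 - t) * v)| ≤ t ^ s * |f'' u| + (1 - t) ^ s * |f'' v|) :
    |(1 / 2) * (f ((a + b) / 2) + (f a + f b) / 2) - (1 / (b - a)) * ∫ t in a..b, f t|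
      ≤ ((b - a) ^ 2 / (8 * (s + 2) * (s + 3)))
          * (|f'' ((a + b) / 2)| + (|f'' a| + |f'' b|) / 2) := by
  have hsc : SConvexOn s (Icc a b) fun x => |f'' x| := hsc
  have ham : a < (a + b) / 2 := by linarith
  have hmb : (a + b) / 2 < b := by linarith
  have hsub₁ : Icc a ((a + b) / 2) ⊆ Icc a b := Icc_subset_Icc_right hmb.le
  have hsub₂ : Icc ((a + b) / 2) b ⊆ Icc a b := Icc_subset_Icc_left ham.le
  have B₁ := abs_integral_kernel_mul_le ham hs.1.le (hint.mono_set hsub₁) (hsc.mono hsub₁)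
  have B₂ := abs_integral_kernel_mul_le hmb hs.1.le (hint.mono_set hsub₂) (hsc.mono hsub₂)
  rw [bullen_identity hab hf' hf'' hint, abs_div, abs_of_pos (by linarith : (0:ℝ) < 2 * (b - a))]
  calc _ ≤ (|∫ x in a..(a + b) / 2, (x - a) * ((a + b) / 2 - x) * f'' x|
          + |∫ x in (a + b) / 2..b, (x - (a + b) / 2) * (b - x) * f'' x|) / (2 * (b - a)) := by
        gcongr; exact abs_add_le _ _
    _ ≤ (((a + b) / 2 - a) ^ 3 * (|f'' a| + |f'' ((a + b) / 2)|) / ((s + 2) * (s + 3))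
          + (b - (a + b) / 2) ^ 3 * (|f'' ((a + b) / 2)| + |f'' b|) / ((s + 2) * (s + 3)))
          / (2 * (b - a)) := by gcongr
    _ = _ := by
        have hba : b - a ≠ 0 := by linarith
        field_simp
        ring
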